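/- Let W:Ω²→[0,1] be a graphon with Ω = A₀ ⊔ A_{1/2} ⊔ A₁ such that the function equal to 0 on A₀, 1/2 on A_{1/2}, and 1 on A₁ is a fractional vertex cover of W of size τ. Writing α_{1/2} = ν(A_{1/2}) and α₁ = ν(A₁), the edge density satisfies ∫∫W ≤ α_{1/2}² + 2α₁ − α₁² ≤ max{4τ², 2τ − τ²}. -/

import Mathlib

/-!
Outside the region where the cover `c` has `c x + c y ≥ 1`, the graphon vanishes almost
everywhere. For the half-integral cover that region is the complement of
`A₁ᶜ ×ˢ A₁ᶜ \ Ah ×ˢ Ah`, which has measure `(1 - α₁)² - α_{1/2}²`, so `∫∫ W ≤ 1 - (1 - α₁)² + α_{1/2}²`.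
The second inequality is elementary: compare with `4τ²` when `4α_{1/2} + 5α₁ ≥ 2` and with
`2τ - τ²` otherwise.
-/

open scoped Classical

open MeasureTheory Set

def IsGraphon {Ω : Type*} [MeasurableSpace Ω] (W : Ω → Ω → ℝ) : Prop :=
  Measurable (Function.uncurry W) ∧ (∀ x y, W x y = W y x) ∧ ∀ x y, W x y ∈ Set.Icc (0:ℝ) 1

def IsFracCover {Ω : Type*} [MeasurableSpace Ω] (ν : Measure Ω) (W : Ω → Ω → ℝ)
    (c : Ω → ℝ) : Prop :=
  Measurable c ∧ (∀ x, c x ∈ Set.Icc (0:ℝ) 1) ∧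
    ∀ᵐ p ∂(ν.prod ν), 0 < W p.1 p.2 → 1 ≤ c p.1 + c p.2

lemma integral_le_one_sub_measureReal_of_ae_nonpos_on {α : Type*} [MeasurableSpace α]
    {μ : Measure α} [IsProbabilityMeasure μ] {f : α → ℝ} {Z : Set α} (hZ : MeasurableSet Z)
    (hf : ∀ x, f x ∈ Icc (0 : ℝ) 1) (hfZ : ∀ᵐ x ∂μ, x ∈ Z → f x ≤ 0) :
    ∫ x, f x ∂μ ≤ 1 - μ.real Z := by
  have hf_le : f ≤ᵐ[μ] Zᶜ.indicator 1 := by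
    filter_upwards [hfZ] with x hx
    by_cases hxZ : x ∈ Z
    · simpa [hxZ] using hx hxZ
    · simpa [hxZ] using (hf x).2
  calc ∫ x, f x ∂μ ≤ ∫ x, Zᶜ.indicator 1 x ∂μ :=
        integral_mono_of_nonneg (.of_forall fun x => (hf x).1)
          ((integrable_const 1).indicator hZ.compl) hf_le
    _ = 1 - μ.real Z := by rw [integral_indicator_one hZ.compl, probReal_compl_eq_one_sub hZ]

lemma measureReal_prod_self_sdiff {α : Type*} [MeasurableSpace α] {ν : Measure α}
    [IsFiniteMeasure ν] {B C : Set α} (hB : MeasurableSet B) (hBC : B ⊆ C) :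
    (ν.prod ν).real (C ×ˢ C \ B ×ˢ B) = ν.real C ^ 2 - ν.real B ^ 2 := by
  rw [measureReal_sdiff (prod_mono hBC hBC) (hB.prod hB), measureReal_prod_prod,
    measureReal_prod_prod, sq, sq]

lemma IsFracCover.ae_nonpos_of_add_lt_one {Ω : Type*} [MeasurableSpace Ω] {ν : Measure Ω}
    {W : Ω → Ω → ℝ} {c : Ω → ℝ} (hc : IsFracCover ν W c) {Z : Set (Ω × Ω)}
    (hZ : ∀ p ∈ Z, c p.1 + c p.2 < 1) :
    ∀ᵐ p ∂(ν.prod ν), p ∈ Z → W p.1 p.2 ≤ 0 := by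
  filter_upwards [hc.2.2] with p hp hpZ
  by_contra! hW
  exact (hZ p hpZ).not_ge (hp hW)

section HalfIntegralCover

variable {Ω : Type*} (Ah A₁ : Set Ω)

noncomputable def halfIntegralCover : Ω → ℝ := fun x => if x ∈ A₁ then 1 else if x ∈ Ah then 1 / 2 else 0

variable {Ah A₁}

lemma halfIntegralCover_add_lt_one {p : Ω × Ω} (hp : p ∈ A₁ᶜ ×ˢ A₁ᶜ \ Ah ×ˢ Ah) :
    halfIntegralCover Ah A₁ p.1 + halfIntegralCover Ah A₁ p.2 < 1 := by
  obtain ⟨⟨hx, hy⟩, hxy⟩ := hp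
  simp only [mem_prod, not_and] at hxy
  simp only [mem_compl_iff] at hx hy
  unfold halfIntegralCover
  by_cases hxh : p.1 ∈ Ah
  · norm_num [hx, hy, hxh, hxy hxh]
  · split_ifs <;> norm_num

theorem integral_le_of_isFracCover_halfIntegralCover [MeasurableSpace Ω] {ν : Measure Ω}
    [IsProbabilityMeasure ν] {W : Ω → Ω → ℝ} (hW : ∀ x y, W x y ∈ Icc (0 : ℝ) 1)
    (hh : MeasurableSet Ah) (h₁ : MeasurableSet A₁) (hdisj : Disjoint Ah A₁)
    (hc : IsFracCover ν W (halfIntegralCover Ah A₁)) :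
    ∫ p, W p.1 p.2 ∂(ν.prod ν) ≤ ν.real Ah ^ 2 + 2 * ν.real A₁ - ν.real A₁ ^ 2 := by
  have hZ : MeasurableSet (A₁ᶜ ×ˢ A₁ᶜ \ Ah ×ˢ Ah) :=
    (h₁.compl.prod h₁.compl).diff (hh.prod hh)
  calc ∫ p, W p.1 p.2 ∂(ν.prod ν) ≤ 1 - (ν.prod ν).real (A₁ᶜ ×ˢ A₁ᶜ \ Ah ×ˢ Ah) :=
        integral_le_one_sub_measureReal_of_ae_nonpos_on hZ (fun p => hW p.1 p.2)
          (hc.ae_nonpos_of_add_lt_one fun _ => halfIntegralCover_add_lt_one)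
    _ = ν.real Ah ^ 2 + 2 * ν.real A₁ - ν.real A₁ ^ 2 := by
      rw [measureReal_prod_self_sdiff hh (subset_compl_iff_disjoint_right.mpr hdisj),
        probReal_compl_eq_one_sub h₁]
      ring

end HalfIntegralCover

lemma sq_add_two_mul_sub_sq_le_max {a b : ℝ} (ha : 0 ≤ a) (hb : 0 ≤ b) :
    a ^ 2 + 2 * b - b ^ 2 ≤ max (4 * (a / 2 + b) ^ 2) (2 * (a / 2 + b) - (a / 2 + b) ^ 2) := by
  rcases le_or_gt 2 (4 * a + 5 * b) with h | h
  · refine le_max_of_le_left ?_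
    nlinarith [mul_nonneg hb (by linarith : (0:ℝ) ≤ 4 * a + 5 * b - 2)]
  · refine le_max_of_le_right ?_
    nlinarith [mul_nonneg ha (by linarith : (0:ℝ) ≤ 1 - 5 / 4 * a - b)]

theorem stmt_10_general {Ω : Type*} [MeasurableSpace Ω] (ν : Measure Ω) [IsProbabilityMeasure ν]
    (W : Ω → Ω → ℝ) (hW : IsGraphon W)
    (A₀ Ah A₁ : Set Ω) (hh : MeasurableSet Ah) (h₁ : MeasurableSet A₁)
    (hdisj : Disjoint A₀ Ah ∧ Disjoint A₀ A₁ ∧ Disjoint Ah A₁)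
    (hc : IsFracCover ν W fun x => if x ∈ A₁ then (1:ℝ) else if x ∈ Ah then 1/2 else 0)
    (τ : ℝ) (hτ : τ = (ν Ah).toReal / 2 + (ν A₁).toReal) :
    (∫ p, W p.1 p.2 ∂(ν.prod ν)) ≤
        (ν Ah).toReal ^ 2 + 2 * (ν A₁).toReal - (ν A₁).toReal ^ 2 ∧
      (ν Ah).toReal ^ 2 + 2 * (ν A₁).toReal - (ν A₁).toReal ^ 2 ≤
        max (4 * τ ^ 2) (2 * τ - τ ^ 2) := by
  subst hτ
  exact ⟨integral_le_of_isFracCover_halfIntegralCover hW.2.2 hh h₁ hdisj.2.2 hc,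
    sq_add_two_mul_sub_sq_le_max ENNReal.toReal_nonneg ENNReal.toReal_nonneg⟩

theorem stmt_10 {Ω : Type*} [MeasurableSpace Ω] (ν : Measure Ω) [IsProbabilityMeasure ν]
    (W : Ω → Ω → ℝ) (hW : IsGraphon W)
    (A₀ Ah A₁ : Set Ω) (h₀ : MeasurableSet A₀) (hh : MeasurableSet Ah) (h₁ : MeasurableSet A₁)
    (hdisj : Disjoint A₀ Ah ∧ Disjoint A₀ A₁ ∧ Disjoint Ah A₁)
    (hcover : A₀ ∪ Ah ∪ A₁ = Set.univ)
    (hc : IsFracCover ν W fun x => if x ∈ A₁ then (1:ℝ) else if x ∈ Ah then 1/2 else 0)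
    (τ : ℝ) (hτ : τ = (ν Ah).toReal / 2 + (ν A₁).toReal) :
    (∫ p, W p.1 p.2 ∂(ν.prod ν)) ≤
        (ν Ah).toReal ^ 2 + 2 * (ν A₁).toReal - (ν A₁).toReal ^ 2 ∧
      (ν Ah).toReal ^ 2 + 2 * (ν A₁).toReal - (ν A₁).toReal ^ 2 ≤
        max (4 * τ ^ 2) (2 * τ - τ ^ 2) :=
  stmt_10_general ν W hW A₀ Ah A₁ hh h₁ hdisj hc τ hτ
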